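/- Let μ > 0 and ω > 0. The functions x ↦ ∂φ_ω/∂ω(x) and x ↦ φ_ω'(x) are linearly independent on (0, ∞), where φ_ω(x) = [(μ+1)ω]^{1/(2μ)} sech^{1/μ}(μ√ω x). -/

import Mathlib

/-!
Both derivatives are `φ_ω` times an explicit factor: `∂_x φ_ω = -√ω tanh(μ√ω x) φ_ω` and
`∂_ω φ_ω = (1/(2μω) - x tanh(μ√ω x)/(2√ω)) φ_ω`. Dividing a vanishing combination
`a ∂_ω φ_ω + b φ_ω'` by `φ_ω > 0` leaves `a/(2μω) = tanh(μ√ω x) (a x/(2√ω) + b √ω)`.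
Comparing `x = 1` and `x = 2` and using that `tanh` is positive and strictly increasing on
`(0, ∞)` forces `a = 0`, and then `b = 0`.
-/

open Real

/-- The soliton profile `φ_ω(x) = ((μ+1)ω)^(1/(2μ)) sech^(1/μ)(μ√ω x)`. -/
noncomputable def phi (μ ω : ℝ) (x : ℝ) : ℝ :=
  ((μ + 1) * ω) ^ (1 / (2 * μ)) * Real.cosh (μ * Real.sqrt ω * x) ^ (-(1 / μ))

theorem Real.tanh_strictMono : StrictMono tanh := by
  intro x y hxy
  by_contra! hle
  have := artanh_le_artanh (neg_one_lt_tanh y) (tanh_lt_one x) hle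
  rw [artanh_tanh, artanh_tanh] at this
  linarith

theorem Real.tanh_pos {x : ℝ} (hx : 0 < x) : 0 < tanh x := by
  simpa only [tanh_zero] using tanh_strictMono hx

theorem HasDerivAt.cosh_rpow_const {f : ℝ → ℝ} {f' x : ℝ} (hf : HasDerivAt f f' x) (p : ℝ) :
    HasDerivAt (fun y => Real.cosh (f y) ^ p) (p * f' * tanh (f x) * Real.cosh (f x) ^ p) x := by
  have hcosh : Real.cosh (f x) ≠ 0 := (Real.cosh_pos _).ne'
  convert hf.cosh.rpow_const (p := p) (Or.inl hcosh) using 1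
  rw [rpow_sub_one hcosh, tanh_eq_sinh_div_cosh]
  field_simp

theorem hasDerivAt_phi {μ : ℝ} (hμ : μ ≠ 0) (ω x : ℝ) :
    HasDerivAt (phi μ ω) (phi μ ω x * (-√ω * tanh (μ * √ω * x))) x := by
  have hlin : HasDerivAt (fun y => μ * √ω * y) (μ * √ω) x := by
    simpa using (hasDerivAt_id x).const_mul (μ * √ω)
  refine ((hlin.cosh_rpow_const (-(1 / μ))).const_mul
    (((μ + 1) * ω) ^ (1 / (2 * μ)))).congr_deriv ?_
  unfold phi
  field_simp

theorem hasDerivAt_phi_frequency {μ ω : ℝ} (hμ : μ ≠ 0) (hμ₁ : μ + 1 ≠ 0) (hω : 0 < ω) (x : ℝ) :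
    HasDerivAt (fun σ => phi μ σ x)
      (phi μ ω x * (1 / (2 * μ * ω) - tanh (μ * √ω * x) * (x / (2 * √ω)))) ω := by
  have hbase : (μ + 1) * ω ≠ 0 := mul_ne_zero hμ₁ hω.ne'
  have hamp : HasDerivAt (fun σ => ((μ + 1) * σ) ^ (1 / (2 * μ)))
      ((μ + 1) * (1 / (2 * μ)) * ((μ + 1) * ω) ^ (1 / (2 * μ) - 1)) ω := by
    simpa using ((hasDerivAt_id ω).const_mul (μ + 1)).rpow_const (p := 1 / (2 * μ)) (Or.inl hbase)
  have hscale : HasDerivAt (fun σ => μ * √σ * x) (μ * (1 / (2 * √ω)) * x) ω :=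
    ((hasDerivAt_sqrt hω.ne').const_mul μ).mul_const x
  refine (hamp.mul (hscale.cosh_rpow_const (-(1 / μ)))).congr_deriv ?_
  unfold phi
  rw [rpow_sub_one hbase]
  field_simp
  ring

theorem phi_pos {μ ω : ℝ} (hμ : 0 < μ) (hω : 0 < ω) (x : ℝ) : 0 < phi μ ω x := by
  unfold phi
  have := cosh_pos (μ * √ω * x)
  positivity

theorem eq_zero_of_eq_mul_affine_at_two_points {A B C a b x₁ x₂ t₁ t₂ : ℝ} (hA : 0 < A)
    (hB : 0 ≤ B) (hC : C ≠ 0) (hx : x₁ ≤ x₂) (ht₁ : 0 < t₁) (ht : t₁ < t₂)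
    (h₁ : a * A = t₁ * (a * B * x₁ + b * C)) (h₂ : a * A = t₂ * (a * B * x₂ + b * C)) :
    a = 0 ∧ b = 0 := by
  have hcoeff : 0 < A * (t₂ - t₁) + t₁ * t₂ * B * (x₂ - x₁) := by
    have := sub_pos.mpr ht
    have := sub_nonneg.mpr hx
    have := ht₁.trans ht
    positivity
  have ha : a = 0 := by
    have : a * (A * (t₂ - t₁) + t₁ * t₂ * B * (x₂ - x₁)) = 0 := by
      linear_combination t₂ * h₁ - t₁ * h₂
    exact (mul_eq_zero.mp this).resolve_right hcoeff.ne'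
  subst ha
  have : t₁ * C * b = 0 := by linear_combination -h₁
  exact ⟨rfl, (mul_eq_zero.mp this).resolve_left (mul_ne_zero ht₁.ne' hC)⟩

theorem reduced_relation_of_phi_derivatives {μ ω a b x : ℝ} (hμ : 0 < μ) (hω : 0 < ω)
    (h : a * deriv (fun σ => phi μ σ x) ω + b * deriv (phi μ ω) x = 0) :
    a * (1 / (2 * μ * ω)) = tanh (μ * √ω * x) * (a * (1 / (2 * √ω)) * x + b * √ω) := by
  rw [(hasDerivAt_phi_frequency hμ.ne' (by positivity) hω x).deriv,
    (hasDerivAt_phi hμ.ne' ω x).deriv] at h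
  have : phi μ ω x * (a * (1 / (2 * μ * ω))
      - tanh (μ * √ω * x) * (a * (1 / (2 * √ω)) * x + b * √ω)) = 0 := by
    linear_combination h
  exact sub_eq_zero.mp ((mul_eq_zero.mp this).resolve_left (phi_pos hμ hω x).ne')

/-- The partial derivative in `ω` of the soliton and its spatial derivative are linearly
independent on `(0, ∞)`. -/
theorem soliton_derivatives_linearly_independent (μ ω : ℝ) (hμ : 0 < μ) (hω : 0 < ω) :
    ∀ a b : ℝ,
      (∀ x ∈ Set.Ioi (0:ℝ),
        a * deriv (fun σ => phi μ σ x) ω + b * deriv (phi μ ω) x = 0) →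
      a = 0 ∧ b = 0 := by
  intro a b h
  have hs : 0 < μ * √ω := mul_pos hμ (sqrt_pos.mpr hω)
  have h₁ := reduced_relation_of_phi_derivatives hμ hω (h 1 (Set.mem_Ioi.mpr one_pos))
  have h₂ := reduced_relation_of_phi_derivatives hμ hω (h 2 (Set.mem_Ioi.mpr two_pos))
  exact eq_zero_of_eq_mul_affine_at_two_points (by positivity) (by positivity)
    (sqrt_pos.mpr hω).ne' one_le_two (tanh_pos (by positivity))
    (tanh_strictMono (by linarith)) h₁ h₂
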